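/- Consider the parallel stochastic Newton iteration x^{k+1} = x^k − (1/b) Σ_{i=1}^c (M_{S^k_i})⁻¹ ∇f(x^k), where the S^k_i are i.i.d. copies of a proper non-vacuous sampling Ŝ, f satisfies f(x)+⟨∇f(x),h⟩+½⟨h,Gh⟩ ≤ f(x+h) ≤ f(x)+⟨∇f(x),h⟩+½⟨h,Mh⟩ with 0 ≺ G ⪯ M. Let λ = λ_max(G^{-1/2} M G^{-1/2}), θ = λ_max(G^{1/2} E[(M_Ŝ)⁻¹] G^{1/2}), σ₁ = λ_min(G^{1/2} E[(M_Ŝ)⁻¹] G^{1/2}). If b ≥ (c−1)λθ + 1, then E[f(x^{k+1}) − f(x*)] ≤ (1 − cσ₁/b) · E[f(x^k) − f(x*)]. -/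

import Mathlib

/-!
Write `H_S = (M_S)⁻¹`, `H = E[H_Ŝ]`, `g = ∇f(x^k)` and `F = f(x^k) - f(x*)`. The upper quadratic
model bounds `f(x^{k+1})` by a quadratic in the step `(1/b) Σᵢ H_{Sᵢ} g`. Averaging over the `c`
independent samplings, and using `H_S M H_S = H_S` on the diagonal terms, gives
`E[f(x^{k+1})] - f(x*) ≤ F - (c/b) A + (c A + (c² - c) C) / (2b²)` with `A = gᵀ H g` and
`C = (H g)ᵀ M (H g)`. In the variable `v = G^{-1/2} g` one has `A = vᵀ X v` and
`C = (X v)ᵀ Y (X v)`, so Rayleigh quotients give `A ≥ σ₁ ‖v‖²` and `C ≤ λ ‖X v‖² ≤ λ θ A`, while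
the lower model between `x^k` and `x*` gives `2F ≤ ‖v‖² = gᵀ G⁻¹ g`. The condition on `b` makes the quadratic
term at most `c A / (2b)`, which leaves `F - c A / (2b) ≤ (1 - c σ₁ / b) F`.
-/

open Matrix BigOperators Finset

noncomputable section

/-- `A_S`: zero out entries of `A` outside rows/columns indexed by `S`. -/
def zeroPad {n : ℕ} (A : Matrix (Fin n) (Fin n) ℝ) (S : Finset (Fin n)) :
    Matrix (Fin n) (Fin n) ℝ :=
  Matrix.of fun i j => if i ∈ S ∧ j ∈ S then A i j else 0

/-- `(M_S)⁻¹`: invert the principal submatrix `M_{SS}` in place, zeros elsewhere. -/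
def inPlaceInv {n : ℕ} (M : Matrix (Fin n) (Fin n) ℝ) (S : Finset (Fin n)) :
    Matrix (Fin n) (Fin n) ℝ :=
  Matrix.of fun i j =>
    if hi : i ∈ S then
      if hj : j ∈ S then
        (M.submatrix (fun a : {x // x ∈ S} => (a : Fin n))
            (fun a : {x // x ∈ S} => (a : Fin n)))⁻¹ ⟨i, hi⟩ ⟨j, hj⟩
      else 0
    else 0

/-- The square root of a positive semidefinite matrix, as `Matrix.PosSemidef.sqrt` was defined
in Mathlib (December 2024); removed from Mathlib since. -/
def Matrix.PosSemidef.sqrt {n : Type*} [Fintype n] [DecidableEq n] {A : Matrix n n ℝ}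
    (hA : A.PosSemidef) : Matrix n n ℝ :=
  hA.1.eigenvectorUnitary.1 * diagonal ((↑) ∘ (√·) ∘ hA.1.eigenvalues) *
    (star hA.1.eigenvectorUnitary : Matrix n n ℝ)

namespace Matrix

variable {m : Type*} [Fintype m] {A : Matrix m m ℝ}

lemma IsHermitian.mulVec_dotProduct (hA : A.IsHermitian) (x y : m → ℝ) :
    (A *ᵥ x) ⬝ᵥ y = x ⬝ᵥ A *ᵥ y := by
  rw [dotProduct_mulVec, ← mulVec_transpose, ← conjTranspose_eq_transpose_of_trivial, hA.eq]

lemma IsHermitian.dotProduct_mulVec_mulVec {P : Matrix m m ℝ} (hP : P.IsHermitian)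
    (A : Matrix m m ℝ) (x : m → ℝ) :
    (P *ᵥ x) ⬝ᵥ A *ᵥ (P *ᵥ x) = x ⬝ᵥ (P * A * P) *ᵥ x := by
  rw [← mulVec_mulVec, ← mulVec_mulVec, hP.mulVec_dotProduct]

lemma sum_sum_mul_dotProduct_mulVec {ι : Type*} [Fintype ι] (w : ι → ℝ) (d : ι → m → ℝ)
    (A : Matrix m m ℝ) :
    ∑ a, ∑ b, w a * w b * (d a ⬝ᵥ A *ᵥ d b) = (∑ a, w a • d a) ⬝ᵥ A *ᵥ ∑ b, w b • d b := by
  simp only [mulVec_sum, mulVec_smul, sum_dotProduct, dotProduct_sum, smul_dotProduct,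
    dotProduct_smul, smul_eq_mul, Finset.mul_sum]
  rw [Finset.sum_comm]
  exact Finset.sum_congr rfl fun a _ => Finset.sum_congr rfl fun b _ => by ring

variable [DecidableEq m]

lemma PosDef.neg_dotProduct_inv_mulVec_le (hA : A.PosDef) (g d : m → ℝ) :
    -(g ⬝ᵥ A⁻¹ *ᵥ g) ≤ 2 * (g ⬝ᵥ d) + d ⬝ᵥ A *ᵥ d := by
  set r := A⁻¹ *ᵥ g
  have hAr : A *ᵥ r = g := by
    rw [mulVec_mulVec, mul_nonsing_inv _ hA.det_pos.ne'.isUnit, one_mulVec]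
  -- complete the square: `0 ≤ (d + A⁻¹ g)ᵀ A (d + A⁻¹ g)`
  have hsq := hA.posSemidef.dotProduct_mulVec_nonneg (d + r)
  simp only [star_trivial, mulVec_add, dotProduct_add, add_dotProduct] at hsq
  rw [← hA.isHermitian.mulVec_dotProduct r d, hAr] at hsq
  linarith [dotProduct_comm d g, dotProduct_comm r g]

lemma unitary_conj_diagonal_mul (U : unitaryGroup m ℝ) (d e : m → ℝ) :
    ((U : Matrix m m ℝ) * diagonal d * (star U : Matrix m m ℝ)) *
        ((U : Matrix m m ℝ) * diagonal e * (star U : Matrix m m ℝ)) =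
      (U : Matrix m m ℝ) * diagonal (d * e) * (star U : Matrix m m ℝ) := by
  simp only [Matrix.mul_assoc]
  rw [← Matrix.mul_assoc (star (U : Matrix m m ℝ)), Unitary.coe_star_mul_self, Matrix.one_mul,
    ← Matrix.mul_assoc (diagonal d), diagonal_mul_diagonal]
  rfl

lemma dotProduct_unitary_conj_diagonal_mulVec (U : unitaryGroup m ℝ) (d v : m → ℝ) :
    v ⬝ᵥ ((U : Matrix m m ℝ) * diagonal d * (star U : Matrix m m ℝ)) *ᵥ v =
      ∑ i, d i * ((star U : Matrix m m ℝ) *ᵥ v) i ^ 2 := by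
  rw [← mulVec_mulVec, ← mulVec_mulVec, dotProduct_mulVec, ← mulVec_transpose]
  simp only [dotProduct, mulVec_diagonal, star_eq_conjTranspose,
    conjTranspose_eq_transpose_of_trivial]
  exact Finset.sum_congr rfl fun i _ => by ring

lemma dotProduct_self_eq_sum_unitary_mulVec_sq (U : unitaryGroup m ℝ) (v : m → ℝ) :
    v ⬝ᵥ v = ∑ i, ((star U : Matrix m m ℝ) *ᵥ v) i ^ 2 := by
  simpa using dotProduct_unitary_conj_diagonal_mulVec U 1 v

lemma IsHermitian.eq_conj_diagonal_eigenvalues (hA : A.IsHermitian) :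
    A = (hA.eigenvectorUnitary : Matrix m m ℝ) * diagonal hA.eigenvalues *
      (star hA.eigenvectorUnitary : Matrix m m ℝ) := by
  conv_lhs => rw [hA.spectral_theorem]
  simp [Unitary.conjStarAlgAut_apply]

lemma PosSemidef.sqrt_mul_self (hA : A.PosSemidef) : hA.sqrt * hA.sqrt = A := by
  rw [PosSemidef.sqrt, unitary_conj_diagonal_mul]
  conv_rhs => rw [hA.1.eq_conj_diagonal_eigenvalues]
  congr
  ext i
  simp [Real.mul_self_sqrt (hA.eigenvalues_nonneg i)]

lemma PosSemidef.isHermitian_sqrt (hA : A.PosSemidef) : hA.sqrt.IsHermitian :=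
  isHermitian_mul_mul_conjTranspose _ (isHermitian_diagonal _)

lemma IsHermitian.dotProduct_mulVec_eq_sum (hA : A.IsHermitian) (v : m → ℝ) :
    v ⬝ᵥ A *ᵥ v =
      ∑ i, hA.eigenvalues i * ((star hA.eigenvectorUnitary : Matrix m m ℝ) *ᵥ v) i ^ 2 := by
  conv_lhs => rw [hA.eq_conj_diagonal_eigenvalues]
  exact dotProduct_unitary_conj_diagonal_mulVec _ _ v

lemma IsHermitian.dotProduct_mul_self_mulVec_eq_sum (hA : A.IsHermitian) (v : m → ℝ) :
    v ⬝ᵥ (A * A) *ᵥ v = ∑ i, hA.eigenvalues i * hA.eigenvalues i *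
      ((star hA.eigenvectorUnitary : Matrix m m ℝ) *ᵥ v) i ^ 2 := by
  conv_lhs => rw [hA.eq_conj_diagonal_eigenvalues, unitary_conj_diagonal_mul]
  exact dotProduct_unitary_conj_diagonal_mulVec _ _ v

lemma IsHermitian.dotProduct_mulVec_le_iSup_eigenvalues_mul (hA : A.IsHermitian) (v : m → ℝ) :
    v ⬝ᵥ A *ᵥ v ≤ (⨆ i, hA.eigenvalues i) * (v ⬝ᵥ v) := by
  rw [hA.dotProduct_mulVec_eq_sum, dotProduct_self_eq_sum_unitary_mulVec_sq hA.eigenvectorUnitary,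
    Finset.mul_sum]
  gcongr with i
  exact le_ciSup (Set.finite_range _).bddAbove i

lemma IsHermitian.iInf_eigenvalues_mul_le_dotProduct_mulVec (hA : A.IsHermitian) (v : m → ℝ) :
    (⨅ i, hA.eigenvalues i) * (v ⬝ᵥ v) ≤ v ⬝ᵥ A *ᵥ v := by
  rw [hA.dotProduct_mulVec_eq_sum, dotProduct_self_eq_sum_unitary_mulVec_sq hA.eigenvectorUnitary,
    Finset.mul_sum]
  gcongr with i
  exact ciInf_le (Set.finite_range _).bddBelow i

lemma PosSemidef.dotProduct_mul_self_mulVec_le (hA : A.PosSemidef) (v : m → ℝ) :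
    v ⬝ᵥ (A * A) *ᵥ v ≤ (⨆ i, hA.1.eigenvalues i) * (v ⬝ᵥ A *ᵥ v) := by
  rw [hA.1.dotProduct_mul_self_mulVec_eq_sum, hA.1.dotProduct_mulVec_eq_sum, Finset.mul_sum]
  refine Finset.sum_le_sum fun i _ => ?_
  rw [mul_assoc]
  exact mul_le_mul_of_nonneg_right (le_ciSup (Set.finite_range _).bddAbove i)
    (mul_nonneg (hA.eigenvalues_nonneg i) (sq_nonneg _))

variable {Q G H M : Matrix m m ℝ}

lemma iInf_eigenvalues_mul_dotProduct_inv_mulVec_le (hQ : Q.IsHermitian) (hQu : IsUnit Q.det)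
    (hQQ : Q * Q = G) (hX : (Q * H * Q).IsHermitian) (g : m → ℝ) :
    (⨅ i, hX.eigenvalues i) * (g ⬝ᵥ G⁻¹ *ᵥ g) ≤ g ⬝ᵥ H *ᵥ g := by
  set v := Q⁻¹ *ᵥ g
  have hv : Q *ᵥ v = g := by rw [mulVec_mulVec, mul_nonsing_inv _ hQu, one_mulVec]
  have hG : g ⬝ᵥ G⁻¹ *ᵥ g = v ⬝ᵥ v := by
    rw [← hQQ, mul_inv_rev, ← mulVec_mulVec, ← hQ.inv.mulVec_dotProduct]
  rw [hG, ← hv, hQ.dotProduct_mulVec_mulVec]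
  exact hX.iInf_eigenvalues_mul_le_dotProduct_mulVec v

lemma dotProduct_mulVec_le_iSup_eigenvalues_mul (hQ : Q.IsHermitian) (hQu : IsUnit Q.det)
    (hX : (Q * H * Q).PosSemidef) (hY : (Q⁻¹ * M * Q⁻¹).PosSemidef) (g : m → ℝ) :
    (H *ᵥ g) ⬝ᵥ M *ᵥ (H *ᵥ g) ≤
      (⨆ i, hY.1.eigenvalues i) * (⨆ i, hX.1.eigenvalues i) * (g ⬝ᵥ H *ᵥ g) := by
  set v := Q⁻¹ *ᵥ g
  have hv : Q *ᵥ v = g := by rw [mulVec_mulVec, mul_nonsing_inv _ hQu, one_mulVec]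
  set u := (Q * H * Q) *ᵥ v
  have hu : Q⁻¹ *ᵥ u = H *ᵥ g := by
    rw [← hv]
    simp only [u, mulVec_mulVec, ← Matrix.mul_assoc, nonsing_inv_mul _ hQu, Matrix.one_mul]
  have huu : u ⬝ᵥ u = v ⬝ᵥ ((Q * H * Q) * (Q * H * Q)) *ᵥ v := by
    rw [hX.isHermitian.mulVec_dotProduct, mulVec_mulVec]
  have hlam : 0 ≤ ⨆ i, hY.1.eigenvalues i := Real.iSup_nonneg hY.eigenvalues_nonneg
  calc (H *ᵥ g) ⬝ᵥ M *ᵥ (H *ᵥ g) = u ⬝ᵥ (Q⁻¹ * M * Q⁻¹) *ᵥ u := by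
        rw [← hu, hQ.inv.dotProduct_mulVec_mulVec]
    _ ≤ (⨆ i, hY.1.eigenvalues i) * (u ⬝ᵥ u) := hY.1.dotProduct_mulVec_le_iSup_eigenvalues_mul u
    _ ≤ (⨆ i, hY.1.eigenvalues i) * ((⨆ i, hX.1.eigenvalues i) * (v ⬝ᵥ (Q * H * Q) *ᵥ v)) := by
        rw [huu]
        exact mul_le_mul_of_nonneg_left (hX.dotProduct_mul_self_mulVec_le v) hlam
    _ = (⨆ i, hY.1.eigenvalues i) * (⨆ i, hX.1.eigenvalues i) * (g ⬝ᵥ H *ᵥ g) := by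
        rw [← hQ.dotProduct_mulVec_mulVec, hv]
        ring

end Matrix

lemma apply_sub_smul_sum_le {m ι : Type*} [Fintype m] [Fintype ι] {f : (m → ℝ) → ℝ}
    {M : Matrix m m ℝ} {x g : m → ℝ}
    (hupper : ∀ h, f (x + h) ≤ f x + (g ⬝ᵥ h) + (1/2) * (h ⬝ᵥ (M *ᵥ h)))
    (t : ℝ) (d : ι → m → ℝ) :
    f (x - t • ∑ i, d i) ≤
      f x - t * ∑ i, g ⬝ᵥ d i + t ^ 2 / 2 * ∑ i, ∑ j, d i ⬝ᵥ M *ᵥ d j := by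
  have h := hupper (-(t • ∑ i, d i))
  rw [← sub_eq_add_neg] at h
  simp only [dotProduct_neg, neg_dotProduct, mulVec_neg, dotProduct_smul, smul_dotProduct,
    mulVec_smul, smul_eq_mul, dotProduct_sum, sum_dotProduct, mulVec_sum] at h
  refine h.trans (le_of_eq ?_)
  simp only [Finset.sum_neg_distrib, ← Finset.mul_sum]
  rw [Finset.sum_comm]
  ring

section ProductWeights

/-! `∑ s : Fin c → α, (∏ k, w (s k)) * F s` is the expectation of `F` over `c` i.i.d. draws
from the law `w`. -/

variable {α : Type*} [Fintype α] {c : ℕ} (w : α → ℝ)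

lemma sum_prod_weight_mul_prod (h : Fin c → α → ℝ) :
    ∑ s : Fin c → α, (∏ k, w (s k)) * ∏ k, h k (s k) = ∏ k, ∑ a, w a * h k a := by
  simp_rw [← Finset.prod_mul_distrib]
  exact (Fintype.prod_sum fun k a => w a * h k a).symm

variable {w}

lemma sum_prod_weight (hw : ∑ a, w a = 1) : ∑ s : Fin c → α, ∏ k, w (s k) = 1 := by
  simpa [hw] using sum_prod_weight_mul_prod w fun _ _ => 1

lemma sum_prod_weight_mul_apply (hw : ∑ a, w a = 1) (i : Fin c) (φ : α → ℝ) :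
    ∑ s : Fin c → α, (∏ k, w (s k)) * φ (s i) = ∑ a, w a * φ a := by
  simpa [mul_ite, Finset.sum_ite_irrel, hw] using
    sum_prod_weight_mul_prod w fun k a => if k = i then φ a else 1

lemma sum_prod_weight_mul_apply_mul_apply (hw : ∑ a, w a = 1) {i j : Fin c} (hij : i ≠ j)
    (φ χ : α → ℝ) :
    ∑ s : Fin c → α, (∏ k, w (s k)) * (φ (s i) * χ (s j)) =
      (∑ a, w a * φ a) * ∑ a, w a * χ a := by
  set h : Fin c → α → ℝ := fun k => if k = i then φ else if k = j then χ else 1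
  have hs (s : Fin c → α) : ∏ k, h k (s k) = φ (s i) * χ (s j) := by
    rw [Fintype.prod_eq_mul i j hij fun k hk => by simp [h, hk.1, hk.2]]
    simp [h, hij.symm]
  have hsum : ∏ k, ∑ a, w a * h k a = (∑ a, w a * φ a) * ∑ a, w a * χ a := by
    rw [Fintype.prod_eq_mul i j hij fun k hk => by simp [h, hk.1, hk.2, hw]]
    simp [h, hij.symm]
  simpa only [hs, hsum] using sum_prod_weight_mul_prod w h

lemma sum_prod_weight_mul_apply_apply (hw : ∑ a, w a = 1) {i j : Fin c} (hij : i ≠ j)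
    (ψ : α → α → ℝ) :
    ∑ s : Fin c → α, (∏ k, w (s k)) * ψ (s i) (s j) = ∑ a, ∑ b, w a * w b * ψ a b := by
  classical
  -- expand `ψ` over indicators to reduce to the product case
  have hψ (x y : α) :
      ψ x y = ∑ a, ∑ b, ψ a b * ((if x = a then 1 else 0) * (if y = b then 1 else 0)) := by
    simp
  rw [Finset.sum_congr rfl fun s _ => by rw [hψ (s i) (s j)]]
  simp_rw [Finset.mul_sum]
  rw [Finset.sum_comm]
  refine Finset.sum_congr rfl fun a _ => ?_
  rw [Finset.sum_comm]
  refine Finset.sum_congr rfl fun b _ => ?_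
  simp_rw [mul_left_comm _ (ψ a b), ← Finset.mul_sum]
  rw [sum_prod_weight_mul_apply_mul_apply hw hij (fun x => if x = a then 1 else 0)
    (fun y => if y = b then 1 else 0)]
  simp [mul_comm]

lemma sum_prod_weight_mul_sum_apply (hw : ∑ a, w a = 1) (φ : α → ℝ) :
    ∑ s : Fin c → α, (∏ k, w (s k)) * ∑ i, φ (s i) = c * ∑ a, w a * φ a := by
  simp_rw [Finset.mul_sum]
  rw [Finset.sum_comm]
  simp only [sum_prod_weight_mul_apply hw, Finset.sum_const, Finset.card_univ, Fintype.card_fin,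
    nsmul_eq_mul, Finset.mul_sum]

lemma sum_prod_weight_mul_sum_sum_apply (hw : ∑ a, w a = 1) (ψ : α → α → ℝ) :
    ∑ s : Fin c → α, (∏ k, w (s k)) * ∑ i, ∑ j, ψ (s i) (s j) =
      c * ∑ a, w a * ψ a a + ((c : ℝ) ^ 2 - c) * ∑ a, ∑ b, w a * w b * ψ a b := by
  set E₁ := ∑ a, w a * ψ a a
  set E₂ := ∑ a, ∑ b, w a * w b * ψ a b
  have hpair (i j : Fin c) : ∑ s : Fin c → α, (∏ k, w (s k)) * ψ (s i) (s j) =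
      E₂ + if i = j then E₁ - E₂ else 0 := by
    split_ifs with hij
    · subst hij
      rw [sum_prod_weight_mul_apply hw i fun a => ψ a a]
      ring
    · rw [sum_prod_weight_mul_apply_apply hw hij, add_zero]
  simp_rw [Finset.mul_sum]
  rw [Finset.sum_comm]
  simp_rw [Finset.sum_comm (s := Finset.univ (α := Fin c → α)), hpair]
  simp only [Finset.sum_add_distrib, Finset.sum_const, Finset.card_univ, Fintype.card_fin,
    nsmul_eq_mul, Finset.sum_ite_eq, Finset.mem_univ, if_true]
  ring

end ProductWeights

namespace PSN

variable {n : ℕ} {M : Matrix (Fin n) (Fin n) ℝ}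

def identityCols (S : Finset (Fin n)) : Matrix (Fin n) {x // x ∈ S} ℝ :=
  (1 : Matrix (Fin n) (Fin n) ℝ).submatrix id Subtype.val

lemma identityCols_transpose_mul_mul (S : Finset (Fin n)) (A : Matrix (Fin n) (Fin n) ℝ) :
    (identityCols S)ᵀ * A * identityCols S = A.submatrix Subtype.val Subtype.val := by
  ext a b
  simp [identityCols, mul_apply, one_apply]

lemma inPlaceInv_eq_identityCols (M : Matrix (Fin n) (Fin n) ℝ) (S : Finset (Fin n)) :
    inPlaceInv M S = identityCols S * (M.submatrix Subtype.val Subtype.val : Matrix S S ℝ)⁻¹ *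
      (identityCols S)ᵀ := by
  ext i j
  have hnot : ∀ k ∉ S, ∀ a : {x // x ∈ S}, k ≠ a := fun k hk a h => hk (h ▸ a.2)
  by_cases hi : i ∈ S <;> by_cases hj : j ∈ S
  · lift i to S using hi
    lift j to S using hj
    simp [inPlaceInv, identityCols, mul_apply, one_apply]
  all_goals simp [inPlaceInv, identityCols, mul_apply, one_apply, hi, hj, hnot, eq_comm]

lemma posSemidef_inPlaceInv (hM : M.PosDef) (S : Finset (Fin n)) :
    (inPlaceInv M S).PosSemidef := by
  rw [inPlaceInv_eq_identityCols, ← conjTranspose_eq_transpose_of_trivial]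
  exact (hM.submatrix Subtype.val_injective).inv.posSemidef.mul_mul_conjTranspose_same _

lemma inPlaceInv_mul_mul_inPlaceInv (hM : M.PosDef) (S : Finset (Fin n)) :
    inPlaceInv M S * M * inPlaceInv M S = inPlaceInv M S := by
  set E := identityCols S
  set B : Matrix S S ℝ := M.submatrix Subtype.val Subtype.val
  have hB : IsUnit B.det := (hM.submatrix Subtype.val_injective).det_pos.ne'.isUnit
  rw [inPlaceInv_eq_identityCols]
  calc E * B⁻¹ * Eᵀ * M * (E * B⁻¹ * Eᵀ) = E * (B⁻¹ * (Eᵀ * M * E) * B⁻¹) * Eᵀ := by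
        simp only [Matrix.mul_assoc]
    _ = E * B⁻¹ * Eᵀ := by
        rw [identityCols_transpose_mul_mul, nonsing_inv_mul _ hB, Matrix.one_mul]

def expectedInPlaceInv (M : Matrix (Fin n) (Fin n) ℝ) (w : Finset (Fin n) → ℝ) :
    Matrix (Fin n) (Fin n) ℝ :=
  ∑ S, w S • inPlaceInv M S

variable {w : Finset (Fin n) → ℝ}

lemma posSemidef_expectedInPlaceInv (hM : M.PosDef) (hw : ∀ S, 0 ≤ w S) :
    (expectedInPlaceInv M w).PosSemidef :=
  posSemidef_sum _ fun S _ => (posSemidef_inPlaceInv hM S).smul (hw S)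

lemma expectedInPlaceInv_mulVec (v : Fin n → ℝ) :
    expectedInPlaceInv M w *ᵥ v = ∑ S, w S • (inPlaceInv M S *ᵥ v) := by
  simp only [expectedInPlaceInv, sum_mulVec, smul_mulVec]

lemma dotProduct_expectedInPlaceInv_mulVec (u v : Fin n → ℝ) :
    u ⬝ᵥ expectedInPlaceInv M w *ᵥ v = ∑ S, w S * (u ⬝ᵥ inPlaceInv M S *ᵥ v) := by
  simp only [expectedInPlaceInv_mulVec, dotProduct_sum, dotProduct_smul, smul_eq_mul]

lemma expected_suboptimality_le {f : (Fin n → ℝ) → ℝ} (hM : M.PosDef) (hw0 : ∀ S, 0 ≤ w S)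
    (hw1 : ∑ S, w S = 1) {x g : Fin n → ℝ}
    (hupper : ∀ h, f (x + h) ≤ f x + (g ⬝ᵥ h) + (1/2) * (h ⬝ᵥ (M *ᵥ h)))
    (c : ℕ) (b : ℝ) (y : Fin n → ℝ) :
    ∑ s : Fin c → Finset (Fin n), (∏ i, w (s i)) *
        (f (x - (1/b) • ∑ i, inPlaceInv M (s i) *ᵥ g) - f y) ≤
      f x - f y - c / b * (g ⬝ᵥ expectedInPlaceInv M w *ᵥ g) +
        1 / (2 * b ^ 2) * (c * (g ⬝ᵥ expectedInPlaceInv M w *ᵥ g) + ((c : ℝ) ^ 2 - c) *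
          ((expectedInPlaceInv M w *ᵥ g) ⬝ᵥ M *ᵥ (expectedInPlaceInv M w *ᵥ g))) := by
  set d : Finset (Fin n) → Fin n → ℝ := fun S => inPlaceInv M S *ᵥ g
  have hdiag (S : Finset (Fin n)) : d S ⬝ᵥ M *ᵥ d S = g ⬝ᵥ inPlaceInv M S *ᵥ g := by
    rw [(posSemidef_inPlaceInv hM S).isHermitian.dotProduct_mulVec_mulVec,
      inPlaceInv_mul_mul_inPlaceInv hM]
  calc ∑ s : Fin c → Finset (Fin n), (∏ i, w (s i)) * (f (x - (1/b) • ∑ i, d (s i)) - f y)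
      ≤ ∑ s : Fin c → Finset (Fin n), (∏ i, w (s i)) * (f x - f y - 1 / b * ∑ i, g ⬝ᵥ d (s i) +
          (1 / b) ^ 2 / 2 * ∑ i, ∑ j, d (s i) ⬝ᵥ M *ᵥ d (s j)) := by
        gcongr with s
        · exact Finset.prod_nonneg fun i _ => hw0 _
        · linarith [apply_sub_smul_sum_le hupper (1 / b) fun i => d (s i)]
    _ = (f x - f y) * ∑ s : Fin c → Finset (Fin n), (∏ i, w (s i)) -
          1 / b * ∑ s : Fin c → Finset (Fin n), (∏ i, w (s i)) * ∑ i, g ⬝ᵥ d (s i) +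
          (1 / b) ^ 2 / 2 * ∑ s : Fin c → Finset (Fin n),
            (∏ i, w (s i)) * ∑ i, ∑ j, d (s i) ⬝ᵥ M *ᵥ d (s j) := by
        rw [Finset.mul_sum, Finset.mul_sum, Finset.mul_sum, ← Finset.sum_sub_distrib,
          ← Finset.sum_add_distrib]
        exact Finset.sum_congr rfl fun s _ => by ring
    _ = _ := by
        rw [sum_prod_weight hw1, sum_prod_weight_mul_sum_apply hw1 fun S => g ⬝ᵥ d S,
          sum_prod_weight_mul_sum_sum_apply hw1 fun S T => d S ⬝ᵥ M *ᵥ d T,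
          sum_sum_mul_dotProduct_mulVec, dotProduct_expectedInPlaceInv_mulVec,
          expectedInPlaceInv_mulVec]
        simp only [hdiag, d]
        ring

lemma one_step_bound_of_estimates {c : ℕ} {b lam θ σ A C N F : ℝ} (hb0 : 0 < b)
    (hb : ((c : ℝ) - 1) * lam * θ + 1 ≤ b) (hσ : 0 ≤ σ) (hA0 : 0 ≤ A) (hA : σ * N ≤ A)
    (hC : C ≤ lam * θ * A) (hF : 2 * F ≤ N) :
    F - c / b * A + 1 / (2 * b ^ 2) * (c * A + ((c : ℝ) ^ 2 - c) * C) ≤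
      (1 - c * σ / b) * F := by
  have hc2 : (0 : ℝ) ≤ (c : ℝ) ^ 2 - c := by
    rw [sq, ← mul_sub_one]
    rcases Nat.eq_zero_or_pos c with rfl | hc
    · simp
    · exact mul_nonneg c.cast_nonneg (sub_nonneg.mpr (Nat.one_le_cast.mpr hc))
  have hquad : c * A + ((c : ℝ) ^ 2 - c) * C ≤ c * A * b := calc
    c * A + ((c : ℝ) ^ 2 - c) * C ≤ c * A + ((c : ℝ) ^ 2 - c) * (lam * θ * A) := by gcongr
    _ = c * A * (((c : ℝ) - 1) * lam * θ + 1) := by ring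
    _ ≤ c * A * b := by gcongr
  have hσF : 2 * σ * F ≤ A := by nlinarith
  calc F - c / b * A + 1 / (2 * b ^ 2) * (c * A + ((c : ℝ) ^ 2 - c) * C)
      ≤ F - c / b * A + 1 / (2 * b ^ 2) * (c * A * b) := by gcongr
    _ = F - c * A / (2 * b) := by field_simp; ring
    _ ≤ F - c * (2 * σ * F) / (2 * b) := by gcongr
    _ = (1 - c * σ / b) * F := by field_simp

end PSN

open PSN in
theorem stmt6_general {n : ℕ} (c : ℕ) (hc : 0 < c) (b : ℝ)
    (f : (Fin n → ℝ) → ℝ) (g : (Fin n → ℝ) → (Fin n → ℝ))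
    (G M : Matrix (Fin n) (Fin n) ℝ) (hG : G.PosDef) (hM : M.PosDef)
    (hlower : ∀ x h, f x + (g x ⬝ᵥ h) + (1/2) * (h ⬝ᵥ (G *ᵥ h)) ≤ f (x + h))
    (hupper : ∀ x h, f (x + h) ≤ f x + (g x ⬝ᵥ h) + (1/2) * (h ⬝ᵥ (M *ᵥ h)))
    (xstar : Fin n → ℝ)
    (w : Finset (Fin n) → ℝ) (hw0 : ∀ S, 0 ≤ w S)
    (hw1 : ∑ S : Finset (Fin n), w S = 1)
    (X Y : Matrix (Fin n) (Fin n) ℝ)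
    (hXdef : X = hG.posSemidef.sqrt *
      (∑ S : Finset (Fin n), w S • inPlaceInv M S) * hG.posSemidef.sqrt)
    (hYdef : Y = (hG.posSemidef.sqrt)⁻¹ * M * (hG.posSemidef.sqrt)⁻¹)
    (hX : X.IsHermitian) (hY : Y.IsHermitian)
    (lam θ σ₁ : ℝ)
    (hlam : lam = ⨆ i, hY.eigenvalues i)
    (hθ : θ = ⨆ i, hX.eigenvalues i)
    (hσ : σ₁ = ⨅ i, hX.eigenvalues i)
    (hb : ((c : ℝ) - 1) * lam * θ + 1 ≤ b)
    (xk : Fin n → ℝ) :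
    ∑ s : Fin c → Finset (Fin n), (∏ i, w (s i)) *
        (f (xk - (1/b) • ∑ i, (inPlaceInv M (s i)) *ᵥ g xk) - f xstar) ≤
      (1 - (c : ℝ) * σ₁ / b) * (f xk - f xstar) := by
  set Q := hG.posSemidef.sqrt
  have hQ : Q.IsHermitian := hG.posSemidef.isHermitian_sqrt
  have hQQ : Q * Q = G := hG.posSemidef.sqrt_mul_self
  have hQu : IsUnit Q.det :=
    isUnit_of_mul_isUnit_left (by rw [← det_mul, hQQ]; exact hG.det_pos.ne'.isUnit)
  have hH := posSemidef_expectedInPlaceInv hM hw0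
  have hXpsd : X.PosSemidef := by
    have h := hH.mul_mul_conjTranspose_same Q
    rw [hQ.eq] at h
    rw [hXdef]
    exact h
  have hYpsd : Y.PosSemidef := by
    have h := hM.posSemidef.mul_mul_conjTranspose_same Q⁻¹
    rwa [hQ.inv.eq, ← hYdef] at h
  subst hXdef hYdef hlam hθ hσ
  have hb0 : 0 < b := by
    have := mul_nonneg (mul_nonneg (sub_nonneg.mpr (Nat.one_le_cast.mpr hc))
      (Real.iSup_nonneg hYpsd.eigenvalues_nonneg)) (Real.iSup_nonneg hXpsd.eigenvalues_nonneg)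
    linarith
  have hF : 2 * (f xk - f xstar) ≤ g xk ⬝ᵥ G⁻¹ *ᵥ g xk := by
    have h := hlower xk (xstar - xk)
    rw [add_sub_cancel] at h
    linarith [hG.neg_dotProduct_inv_mulVec_le (g xk) (xstar - xk)]
  exact (expected_suboptimality_le hM hw0 hw1 (hupper xk) c b xstar).trans
    (one_step_bound_of_estimates hb0 hb (Real.iInf_nonneg hXpsd.eigenvalues_nonneg)
      (hH.dotProduct_mulVec_nonneg _)
      (iInf_eigenvalues_mul_dotProduct_inv_mulVec_le hQ hQu hQQ hX (g xk))
      (dotProduct_mulVec_le_iSup_eigenvalues_mul hQ hQu hXpsd hYpsd (g xk)) hF)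

/-- PSN convergence (one step, conditioned on the current iterate `xk`):
if `b ≥ (c-1)λθ + 1`, then
`E[f(x^{k+1}) - f(x*)] ≤ (1 - cσ₁/b)(f(x^k) - f(x*))`, where the expectation
is over `c` i.i.d. samplings (with weight `w`) of the parallel update. -/
theorem stmt6 {n : ℕ} (hn : 0 < n) (c : ℕ) (hc : 0 < c) (b : ℝ)
    (f : (Fin n → ℝ) → ℝ) (g : (Fin n → ℝ) → (Fin n → ℝ))
    (G M : Matrix (Fin n) (Fin n) ℝ) (hG : G.PosDef) (hM : M.PosDef)
    (hGM : (M - G).PosSemidef)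
    (hlower : ∀ x h, f x + (g x ⬝ᵥ h) + (1/2) * (h ⬝ᵥ (G *ᵥ h)) ≤ f (x + h))
    (hupper : ∀ x h, f (x + h) ≤ f x + (g x ⬝ᵥ h) + (1/2) * (h ⬝ᵥ (M *ᵥ h)))
    (xstar : Fin n → ℝ) (hstar : ∀ y, f xstar ≤ f y)
    (w : Finset (Fin n) → ℝ) (hw0 : ∀ S, 0 ≤ w S)
    (hw1 : ∑ S : Finset (Fin n), w S = 1) (hvac : w ∅ = 0)
    (hprop : ∀ i : Fin n,
      0 < ∑ S ∈ Finset.univ.filter (fun S : Finset (Fin n) => i ∈ S), w S)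
    (X Y : Matrix (Fin n) (Fin n) ℝ)
    (hXdef : X = hG.posSemidef.sqrt *
      (∑ S : Finset (Fin n), w S • inPlaceInv M S) * hG.posSemidef.sqrt)
    (hYdef : Y = (hG.posSemidef.sqrt)⁻¹ * M * (hG.posSemidef.sqrt)⁻¹)
    (hX : X.IsHermitian) (hY : Y.IsHermitian)
    (lam θ σ₁ : ℝ)
    (hlam : lam = ⨆ i, hY.eigenvalues i)
    (hθ : θ = ⨆ i, hX.eigenvalues i)
    (hσ : σ₁ = ⨅ i, hX.eigenvalues i)
    (hb : ((c : ℝ) - 1) * lam * θ + 1 ≤ b)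
    (xk : Fin n → ℝ) :
    ∑ s : Fin c → Finset (Fin n), (∏ i, w (s i)) *
        (f (xk - (1/b) • ∑ i, (inPlaceInv M (s i)) *ᵥ g xk) - f xstar) ≤
      (1 - (c : ℝ) * σ₁ / b) * (f xk - f xstar) :=
  stmt6_general c hc b f g G M hG hM hlower hupper xstar w hw0 hw1 X Y hXdef hYdef hX hY lam θ σ₁
    hlam hθ hσ hb xk
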